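/- arXiv:1104.4755 — 6 statements merged into one kernel-verified Lean document; each statement's English description precedes it below -/
import Mathlib

section
/- For all integers s > r ≥ 0, W_{2^r} + W_{2^s} = k[x]₀. -/
/-!
Write `V = W_{2^r} + W_{2^s}`, `Q = q^{2^r}` and `R = q^{2^s} = Q^{2M}`. Being a T-space, `V` is all
of `k[x]₀` as soon as `x ∈ V`, since `f = x ∘ f`. Substituting powers of `x` into `x + x^Q` and
telescoping gives `x - x^R ∈ W_{2^r}`, while `x + x^R ∈ W_{2^s}`; outside characteristic 2 this
yields `2x ∈ V`. In characteristic 2, substituting `x^a + x^b` into `x^{Q+1}` gives, by Frobenius,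
`x^{a+bQ} + x^{b+aQ} ∈ W_{2^r}`; choosing `a + bQ = R` and `b + aQ` a multiple of `R + 1` makes
the second term lie in `{x^{R+1}}^S ⊆ W_{2^s}`, so `x^R ∈ V` and `x = (x + x^R) - x^R ∈ V`.
-/

open Polynomial

variable (k : Type*) [Field k] [Fintype k]

/-- `k[x]₀`: the free non-unital associative `k`-algebra on one generator `x`,
identified with the polynomials over `k` with zero constant term,
viewed as a `k`-submodule of `Polynomial k`. -/
noncomputable def A0 : Submodule k (Polynomial k) :=
  LinearMap.ker (Polynomial.aeval (0 : k)).toLinearMap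

/-- A `T`-space of `k[x]₀`: a `k`-linear subspace of `k[x]₀` closed under
substitutions `f ↦ f ∘ g` for `g ∈ k[x]₀`. -/
def IsTSpace (V : Submodule k (Polynomial k)) : Prop :=
  V ≤ A0 k ∧ ∀ f ∈ V, ∀ g ∈ A0 k, f.comp g ∈ V

/-- `H^S`: the smallest `T`-space of `k[x]₀` containing `H`. -/
noncomputable def TSp (H : Set (Polynomial k)) : Submodule k (Polynomial k) :=
  sInf {V | IsTSpace k V ∧ H ⊆ V}

/-- A `T`-ideal of `k[x]₀`: a `T`-space that is also an ideal of `k[x]₀`. -/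
def IsTIdeal (V : Submodule k (Polynomial k)) : Prop :=
  IsTSpace k V ∧ ∀ f ∈ V, ∀ g ∈ A0 k, g * f ∈ V

/-- `H^T`: the smallest `T`-ideal of `k[x]₀` containing `H`. -/
noncomputable def TId (H : Set (Polynomial k)) : Submodule k (Polynomial k) :=
  sInf {V | IsTIdeal k V ∧ H ⊆ V}

/-- `W_n = {x + x^{q^n}}^S + {x^{q^n+1}}^S`, where `q` is the order of `k`. -/
noncomputable def Wn (n : ℕ) : Submodule k (Polynomial k) :=
  TSp k {X + X ^ (Fintype.card k ^ n)} ⊔ TSp k {X ^ (Fintype.card k ^ n + 1)}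

/-- `U_n = {x - x^{q^{2n}}}^T`, where `q` is the order of `k`. -/
noncomputable def Un (n : ℕ) : Submodule k (Polynomial k) :=
  TId k {X - X ^ (Fintype.card k ^ (2 * n))}

-- Witnesses: `b = c (R - 1) / (4c² - 1)` with `R = (2c)^(2M)`, and `a = R - 2bc`.
theorem exists_exponent_pair_of_even (c M : ℕ) (hc : 0 < c) (hM : 0 < M) :
    ∃ a b, 0 < a ∧ 0 < b ∧ a + b * (2 * c) = (2 * c) ^ (2 * M) ∧
      b + a * (2 * c) = c * ((2 * c) ^ (2 * M) + 1) := by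
  obtain ⟨S, hS⟩ := Nat.sub_dvd_pow_sub_pow ((2 * c) ^ 2) 1 M
  rw [one_pow, ← pow_mul] at hS
  have hQ : 4 ≤ (2 * c) ^ 2 := by nlinarith
  have hQR : (2 * c) ^ 2 ≤ (2 * c) ^ (2 * M) := Nat.pow_le_pow_right (by omega) (by omega)
  generalize (2 * c) ^ (2 * M) = R at *
  have hS0 : 0 < S := Nat.pos_of_ne_zero (by rintro rfl; omega)
  zify [hQ.trans' (by norm_num : 1 ≤ 4), (hQ.trans hQR).trans' (by norm_num : 1 ≤ 4)] at hS
  have hbQ : c * S * (2 * c) < R := by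
    zify; nlinarith [mul_pos (mul_pos hc hc) hS0]
  refine ⟨R - c * S * (2 * c), c * S, by omega, by positivity, by omega, ?_⟩
  zify [hbQ.le]
  linear_combination c * hS

section

variable {F : Type*} [Field F]

theorem mem_A0_iff {p : F[X]} : p ∈ A0 F ↔ p.eval 0 = 0 := by
  simp [A0, LinearMap.mem_ker, aeval_def, eval]

theorem X_pow_mem_A0 {d : ℕ} (hd : d ≠ 0) : (X ^ d : F[X]) ∈ A0 F := by
  simp [mem_A0_iff, hd]

theorem X_mem_A0 : (X : F[X]) ∈ A0 F := by
  simpa using X_pow_mem_A0 (F := F) one_ne_zero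

theorem X_add_X_pow_mem_A0 {Q : ℕ} (hQ : Q ≠ 0) : (X + X ^ Q : F[X]) ∈ A0 F :=
  add_mem X_mem_A0 (X_pow_mem_A0 hQ)

theorem isTSpace_A0 : IsTSpace F (A0 F) :=
  ⟨le_rfl, fun f hf g hg => by rw [mem_A0_iff] at *; rwa [eval_comp, hg]⟩

theorem TSp_le {H : Set F[X]} {V : Submodule F F[X]} (hV : IsTSpace F V) (hH : H ⊆ V) :
    TSp F H ≤ V :=
  sInf_le ⟨hV, hH⟩

theorem subset_TSp (H : Set F[X]) : H ⊆ TSp F H :=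
  fun _ hh => Submodule.mem_sInf.2 fun _ hV => hV.2 hh

theorem isTSpace_TSp {H : Set F[X]} (hH : H ⊆ A0 F) : IsTSpace F (TSp F H) :=
  ⟨TSp_le isTSpace_A0 hH, fun f hf g hg =>
    Submodule.mem_sInf.2 fun V hV => hV.1.2 f (Submodule.mem_sInf.1 hf V hV) g hg⟩

theorem IsTSpace.sup {V W : Submodule F F[X]} (hV : IsTSpace F V) (hW : IsTSpace F W) :
    IsTSpace F (V ⊔ W) := by
  refine ⟨sup_le hV.1 hW.1, fun f hf g hg => ?_⟩
  obtain ⟨a, ha, b, hb, rfl⟩ := Submodule.mem_sup.1 hf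
  rw [add_comp]
  exact Submodule.add_mem_sup (hV.2 a ha g hg) (hW.2 b hb g hg)

theorem IsTSpace.eq_A0_of_X_mem {V : Submodule F F[X]} (hV : IsTSpace F V) (hX : X ∈ V) :
    V = A0 F :=
  le_antisymm hV.1 fun f hf => by simpa using hV.2 X hX f hf

theorem comp_mem_TSp_singleton {f g : F[X]} (hf : f ∈ A0 F) (hg : g ∈ A0 F) :
    f.comp g ∈ TSp F {f} :=
  (isTSpace_TSp (Set.singleton_subset_iff.2 hf)).2 f (subset_TSp _ rfl) g hg

theorem X_pow_mul_mem_TSp {m d : ℕ} (hm : m ≠ 0) (hd : d ≠ 0) :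
    (X ^ (d * m) : F[X]) ∈ TSp F {X ^ m} := by
  simpa [pow_mul] using comp_mem_TSp_singleton (X_pow_mem_A0 (F := F) hm) (X_pow_mem_A0 hd)

theorem X_pow_add_X_pow_mul_mem_TSp {Q d : ℕ} (hQ : Q ≠ 0) (hd : d ≠ 0) :
    (X ^ d + X ^ (d * Q) : F[X]) ∈ TSp F {X + X ^ Q} := by
  simpa [pow_mul] using comp_mem_TSp_singleton (X_add_X_pow_mem_A0 (F := F) hQ) (X_pow_mem_A0 hd)

theorem X_sub_X_pow_pow_mem_TSp {Q : ℕ} (hQ : Q ≠ 0) (t : ℕ) :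
    (X - X ^ (Q ^ (2 * t)) : F[X]) ∈ TSp F {X + X ^ Q} := by
  induction t with
  | zero => simp
  | succ t ih =>
    have hd : Q ^ (2 * t) ≠ 0 := pow_ne_zero _ hQ
    have htel : (X - X ^ (Q ^ (2 * (t + 1))) : F[X]) = (X - X ^ (Q ^ (2 * t))) +
        (X ^ (Q ^ (2 * t)) + X ^ (Q ^ (2 * t) * Q)) -
        (X ^ (Q ^ (2 * t) * Q) + X ^ (Q ^ (2 * t) * Q * Q)) := by
      ring
    rw [htel]
    exact sub_mem (add_mem ih (X_pow_add_X_pow_mul_mem_TSp hQ hd))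
      (X_pow_add_X_pow_mul_mem_TSp hQ (mul_ne_zero hd hQ))

theorem X_pow_add_X_pow_mem_TSp (p : ℕ) [ExpChar F p] (n : ℕ) {a b : ℕ} (ha : a ≠ 0)
    (hb : b ≠ 0) :
    (X ^ (a + b * p ^ n) + X ^ (b + a * p ^ n) : F[X]) ∈ TSp F {X ^ (p ^ n + 1)} := by
  have hgen : (X ^ (p ^ n + 1) : F[X]) ∈ A0 F := X_pow_mem_A0 (Nat.succ_ne_zero _)
  have hab := comp_mem_TSp_singleton hgen (add_mem (X_pow_mem_A0 ha) (X_pow_mem_A0 hb))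
  have hexp : ((X : F[X]) ^ (p ^ n + 1)).comp (X ^ a + X ^ b) - X ^ (a * (p ^ n + 1)) -
      X ^ (b * (p ^ n + 1)) = X ^ (a + b * p ^ n) + X ^ (b + a * p ^ n) := by
    rw [pow_comp, X_comp, pow_succ, add_pow_expChar_pow, ← pow_mul, ← pow_mul]
    ring
  rw [← hexp]
  exact sub_mem (sub_mem hab (X_pow_mul_mem_TSp (Nat.succ_ne_zero _) ha))
    (X_pow_mul_mem_TSp (Nat.succ_ne_zero _) hb)

theorem X_pow_mem_TSp_sup_TSp_of_charTwo [CharP F 2] {w M : ℕ} (hw : 0 < w) (hM : 0 < M) :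
    (X ^ ((2 ^ w) ^ (2 * M)) : F[X]) ∈
      TSp F {X ^ (2 ^ w + 1)} ⊔ TSp F {X ^ ((2 ^ w) ^ (2 * M) + 1)} := by
  obtain ⟨c, hc⟩ : ∃ c, 2 ^ w = 2 * c := ⟨2 ^ (w - 1), by rw [← pow_succ']; congr; omega⟩
  have hc0 : 0 < c := by have := Nat.two_pow_pos w; omega
  obtain ⟨a, b, ha, hb, hR, hcR⟩ := exists_exponent_pair_of_even c M hc0 hM
  have hpair := X_pow_add_X_pow_mem_TSp (F := F) 2 w ha.ne' hb.ne'
  rw [hc, hR, hcR] at hpair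
  have hmul := X_pow_mul_mem_TSp (F := F) (m := (2 * c) ^ (2 * M) + 1) (Nat.succ_ne_zero _)
    hc0.ne'
  rw [hc]
  simpa using sub_mem (Submodule.mem_sup_left hpair) (Submodule.mem_sup_right hmul)

end

theorem isTSpace_Wn (n : ℕ) : IsTSpace k (Wn k n) := by
  have hq : Fintype.card k ^ n ≠ 0 := pow_ne_zero _ Fintype.card_ne_zero
  exact (isTSpace_TSp (Set.singleton_subset_iff.2 (X_add_X_pow_mem_A0 hq))).sup
    (isTSpace_TSp (Set.singleton_subset_iff.2 (X_pow_mem_A0 (Nat.succ_ne_zero _))))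

/-- For all integers `s > r ≥ 0`, `W_{2^r} + W_{2^s} = k[x]₀`. -/
theorem Wn_pow_two_sup (r s : ℕ) (hrs : r < s) :
    Wn k (2 ^ r) ⊔ Wn k (2 ^ s) = A0 k := by
  obtain ⟨M, hM, hs⟩ : ∃ M, 0 < M ∧ 2 ^ s = 2 ^ r * (2 * M) :=
    ⟨2 ^ (s - r - 1), by positivity, by rw [← pow_succ', ← pow_add]; congr 1; omega⟩
  set q := Fintype.card k
  have hR : q ^ 2 ^ s = (q ^ 2 ^ r) ^ (2 * M) := by rw [hs, pow_mul]
  refine ((isTSpace_Wn k _).sup (isTSpace_Wn k _)).eq_A0_of_X_mem ?_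
  have hXR : X + X ^ (q ^ 2 ^ s) ∈ Wn k (2 ^ s) := Submodule.mem_sup_left (subset_TSp _ rfl)
  by_cases h2 : (2 : k) = 0
  · have := CharTwo.of_one_ne_zero_of_two_eq_zero one_ne_zero h2
    obtain ⟨e, -, hq⟩ := FiniteField.card k 2
    have hXR' := X_pow_mem_TSp_sup_TSp_of_charTwo (F := k) (w := e * 2 ^ r) (by positivity) hM
    rw [pow_mul, ← hq, ← hR] at hXR'
    simpa using sub_mem (Submodule.mem_sup_right hXR)
      ((sup_le_sup le_sup_right le_sup_right : _ ≤ Wn k (2 ^ r) ⊔ Wn k (2 ^ s)) hXR')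
  · have hXR' : X - X ^ (q ^ 2 ^ s) ∈ Wn k (2 ^ r) :=
      Submodule.mem_sup_left (hR ▸ X_sub_X_pow_pow_mem_TSp (pow_ne_zero _ Fintype.card_ne_zero) M)
    rw [← Submodule.smul_mem_iff _ h2, two_smul]
    simpa using add_mem (Submodule.mem_sup_left hXR') (Submodule.mem_sup_right hXR)
end

section
/- For each n ≥ 1, W_n is the internal direct sum of V_n and U_n; that is, W_n = V_n + U_n and V_n ∩ U_n = {0}. -/
open Polynomial

variable (k : Type*) [Field k] [Fintype k]

/-- The set `E_n = {x^{q^n i + j} + x^{i + q^n j} : q^n > i > j ≥ 0} ∪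
{x^{(q^n+1) i} : 1 ≤ i ≤ q^n - 1}`. -/
def En (n : ℕ) : Set (Polynomial k) :=
  {f | ∃ i j : ℕ, j < i ∧ i < Fintype.card k ^ n ∧
      f = X ^ (i * Fintype.card k ^ n + j) + X ^ (i + j * Fintype.card k ^ n)} ∪
  {f | ∃ i : ℕ, 1 ≤ i ∧ i ≤ Fintype.card k ^ n - 1 ∧
      f = X ^ ((Fintype.card k ^ n + 1) * i)}

namespace TPf
set_option linter.unusedSectionVars false
variable {k : Type*} [Field k] [Fintype k]

theorem mem_A0 {f : Polynomial k} : f ∈ A0 k ↔ f.eval 0 = 0 := by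
  simp [A0, LinearMap.mem_ker, aeval_def, eval₂_eq_eval_map, Polynomial.map_id,
    Algebra.algebraMap_self]

theorem X_pow_mem_A0 {c : ℕ} (hc : 1 ≤ c) : (X : Polynomial k) ^ c ∈ A0 k := by
  rw [mem_A0]; simp [zero_pow (by omega : c ≠ 0)]

theorem comp_mem_A0 {f g : Polynomial k} (hf : f ∈ A0 k) (hg : g ∈ A0 k) :
    f.comp g ∈ A0 k := by
  rw [mem_A0] at *
  rw [eval_comp, hg, hf]

theorem isTSpace_A0 : IsTSpace k (A0 k) :=
  ⟨le_rfl, fun _ hf _ hg => comp_mem_A0 hf hg⟩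

theorem subset_TSp {H : Set (Polynomial k)} : H ⊆ TSp k H := by
  intro f hf
  rw [SetLike.mem_coe, TSp, Submodule.mem_sInf]
  exact fun V hV => hV.2 hf

theorem TSp_le {H : Set (Polynomial k)} {V : Submodule k (Polynomial k)}
    (h1 : IsTSpace k V) (h2 : H ⊆ V) : TSp k H ≤ V := sInf_le ⟨h1, h2⟩

theorem isTSpace_TSp {H : Set (Polynomial k)} (hH : H ⊆ A0 k) : IsTSpace k (TSp k H) := by
  constructor
  · exact TSp_le isTSpace_A0 hH
  · intro f hf g hg
    rw [TSp, Submodule.mem_sInf] at hf ⊢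
    exact fun V hV => hV.1.2 f (hf V hV) g hg

theorem A0_eq_span : A0 k = Submodule.span k {f : Polynomial k | ∃ c : ℕ, 1 ≤ c ∧ f = X ^ c} := by
  apply le_antisymm
  · intro f hf
    rw [mem_A0, ← coeff_zero_eq_eval_zero] at hf
    nth_rewrite 1 [f.as_sum_support_C_mul_X_pow]
    apply Submodule.sum_mem
    intro i hi
    have hi1 : 1 ≤ i := by
      rcases Nat.eq_zero_or_pos i with h | h
      · exact absurd (mem_support_iff.mp (h ▸ hi)) (by simp [hf])
      · exact h
    rw [← smul_eq_C_mul]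
    exact Submodule.smul_mem _ _ (Submodule.subset_span ⟨i, hi1, rfl⟩)
  · rw [Submodule.span_le]
    rintro f ⟨c, hc, rfl⟩
    exact X_pow_mem_A0 hc


theorem expand_card_pow (j : ℕ) (f : Polynomial k) :
    Polynomial.expand k (Fintype.card k ^ j) f = f ^ (Fintype.card k ^ j) := by
  induction j with
  | zero => simp
  | succ j ih =>
    rw [pow_succ, ← Polynomial.expand_expand, FiniteField.expand_card, map_pow, ih, ← pow_mul]

theorem comp_X_pow_card_pow (j : ℕ) (f : Polynomial k) :
    f.comp (X ^ (Fintype.card k ^ j)) = f ^ (Fintype.card k ^ j) := by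
  rw [← Polynomial.expand_eq_comp_X_pow, expand_card_pow]

theorem add_pow_card_pow (j : ℕ) (f g : Polynomial k) :
    (f + g) ^ (Fintype.card k ^ j) = f ^ (Fintype.card k ^ j) + g ^ (Fintype.card k ^ j) := by
  rw [← expand_card_pow, ← expand_card_pow, ← expand_card_pow, map_add]

theorem smul_pow_card_pow (j : ℕ) (a : k) (f : Polynomial k) :
    (a • f) ^ (Fintype.card k ^ j) = a • f ^ (Fintype.card k ^ j) := by
  rw [_root_.smul_pow, FiniteField.pow_card_pow]

/-- The submodule of multiples of `X - X^{q^{2n}}`. -/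
noncomputable def MU (k : Type*) [Field k] [Fintype k] (n : ℕ) : Submodule k (Polynomial k) where
  carrier := {f | (X - X ^ (Fintype.card k ^ (2 * n))) ∣ f}
  add_mem' := fun hf hg => dvd_add hf hg
  zero_mem' := dvd_zero _
  smul_mem' := fun a f hf => by
    rw [smul_eq_C_mul]; exact hf.mul_left _

theorem mem_MU {n : ℕ} {f : Polynomial k} :
    f ∈ MU k n ↔ (X - X ^ (Fintype.card k ^ (2 * n))) ∣ f := Iff.rfl

theorem w_dvd_comp (n : ℕ) (g : Polynomial k) :
    ((X : Polynomial k) - X ^ (Fintype.card k ^ (2 * n))) ∣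
      (g - g ^ (Fintype.card k ^ (2 * n))) := by
  have h := Polynomial.sub_dvd_eval_sub ((X : Polynomial k) ^ (Fintype.card k ^ (2 * n))) X
    (g.map Polynomial.C)
  rw [← Polynomial.eval₂_eq_eval_map, ← Polynomial.eval₂_eq_eval_map] at h
  rw [show Polynomial.eval₂ Polynomial.C ((X : Polynomial k) ^ (Fintype.card k ^ (2*n))) g
      = g.comp (X ^ (Fintype.card k ^ (2*n))) from rfl,
    show Polynomial.eval₂ Polynomial.C (X : Polynomial k) g = g.comp X from rfl,
    comp_X_pow_card_pow, Polynomial.comp_X] at h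
  rw [← neg_sub ((X : Polynomial k) ^ (Fintype.card k ^ (2*n))) (X : Polynomial k),
    ← neg_sub (g ^ (Fintype.card k ^ (2*n))) g]
  exact neg_dvd.mpr h.neg_right

theorem isTIdeal_MU (n : ℕ) : IsTIdeal k (MU k n) := by
  have hM2 : 1 ≤ Fintype.card k ^ (2 * n) := Nat.one_le_pow _ _ Fintype.card_pos
  refine ⟨⟨?_, ?_⟩, ?_⟩
  · intro f hf
    obtain ⟨e, rfl⟩ := mem_MU.mp hf
    rw [mem_A0]
    simp [zero_pow (by omega : Fintype.card k ^ (2*n) ≠ 0)]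
  · intro f hf g hg
    obtain ⟨e, rfl⟩ := mem_MU.mp hf
    rw [mem_MU, mul_comp, sub_comp, X_comp, pow_comp, X_comp]
    exact Dvd.dvd.mul_right (w_dvd_comp n g) _
  · intro f hf g hg
    exact (mem_MU.mp hf).mul_left g

theorem Un_eq_MU (n : ℕ) : Un k n = MU k n := by
  apply le_antisymm
  · exact sInf_le ⟨isTIdeal_MU n, by
      intro f hf
      rw [Set.mem_singleton_iff] at hf
      exact mem_MU.mpr (hf ▸ dvd_refl _)⟩
  · intro f hf
    obtain ⟨e, rfl⟩ := mem_MU.mp hf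
    set w : Polynomial k := X - X ^ (Fintype.card k ^ (2 * n)) with hw
    rw [Un, TId, Submodule.mem_sInf]
    intro V hV
    have hwV : w ∈ V := hV.2 rfl
    have he : e = Polynomial.C (e.coeff 0) + (e - Polynomial.C (e.coeff 0)) := by ring
    have h2 : e - Polynomial.C (e.coeff 0) ∈ A0 k := by
      rw [mem_A0, eval_sub, eval_C, coeff_zero_eq_eval_zero, sub_self]
    have heq : w * e = e.coeff 0 • w + (e - Polynomial.C (e.coeff 0)) * w := by
      rw [smul_eq_C_mul]; ring
    rw [heq]
    exact V.add_mem (V.smul_mem _ hwV) (hV.1.2 w hwV _ h2)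
variable (n : ℕ)

theorem w_dvd_pow_sub_pow {u v : ℕ} (hu : 1 ≤ u) (hv : 1 ≤ v)
    (h : u ≡ v [MOD Fintype.card k ^ (2*n) - 1]) :
    (X - X ^ (Fintype.card k ^ (2*n)) : Polynomial k) ∣ X ^ u - X ^ v := by
  have hM2 : 1 ≤ Fintype.card k ^ (2*n) := Nat.one_le_pow _ _ Fintype.card_pos
  have key : ∀ u v : ℕ, 1 ≤ u → u ≤ v → u ≡ v [MOD Fintype.card k ^ (2*n) - 1] →
      (X - X ^ (Fintype.card k ^ (2*n)) : Polynomial k) ∣ X ^ v - X ^ u := by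
    intro u v hu huv huvm
    obtain ⟨t, ht⟩ := (Nat.modEq_iff_dvd' huv).mp huvm
    have hfac : (X ^ v - X ^ u : Polynomial k)
        = X ^ u * ((X ^ (Fintype.card k ^ (2*n) - 1)) ^ t - 1 ^ t) := by
      rw [one_pow, mul_sub, mul_one, ← pow_mul, ← pow_add]
      congr 2
      omega
    rw [hfac]
    have hX : (X ^ (Fintype.card k ^ (2*n)) : Polynomial k)
        = X * X ^ (Fintype.card k ^ (2*n) - 1) := by
      rw [← pow_succ']
      congr 1
      omega
    have h1 : (X - X ^ (Fintype.card k ^ (2*n)) : Polynomial k)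
        = -(X * (X ^ (Fintype.card k ^ (2*n) - 1) - 1)) := by
      rw [hX]; ring
    rw [h1, neg_dvd]
    exact mul_dvd_mul (dvd_pow_self X (by omega)) (sub_dvd_pow_sub_pow _ 1 t)
  rcases le_total u v with hle | hle
  · have h2 := key u v hu hle h
    have e : (X ^ u - X ^ v : Polynomial k) = -(X ^ v - X ^ u) := by ring
    rw [e]
    exact dvd_neg.mpr h2
  · exact key v u hv hle h.symm

theorem gen_left_mem_A0 : (X + X ^ (Fintype.card k ^ n) : Polynomial k) ∈ A0 k := by
  rw [mem_A0]
  have h : Fintype.card k ^ n ≠ 0 := by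
    have := Nat.one_le_pow n (Fintype.card k) Fintype.card_pos
    omega
  simp [zero_pow h]

theorem gen_right_mem_A0 : (X ^ (Fintype.card k ^ n + 1) : Polynomial k) ∈ A0 k :=
  X_pow_mem_A0 (by omega)

theorem comp_mem_Wn_left {g : Polynomial k} (hg : g ∈ A0 k) :
    g + g ^ (Fintype.card k ^ n) ∈ Wn k n := by
  have h1 : (X + X ^ (Fintype.card k ^ n) : Polynomial k)
      ∈ TSp k {X + X ^ (Fintype.card k ^ n)} := subset_TSp rfl
  have h2 := (isTSpace_TSp (by simpa using gen_left_mem_A0 n)).2 _ h1 g hg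
  rw [add_comp, X_comp, pow_comp, X_comp] at h2
  rw [Wn]
  exact Submodule.mem_sup_left h2

theorem comp_mem_Wn_right {g : Polynomial k} (hg : g ∈ A0 k) :
    g ^ (Fintype.card k ^ n + 1) ∈ Wn k n := by
  have h1 : (X ^ (Fintype.card k ^ n + 1) : Polynomial k)
      ∈ TSp k {X ^ (Fintype.card k ^ n + 1)} := subset_TSp rfl
  have h2 := (isTSpace_TSp (by simpa using gen_right_mem_A0 n)).2 _ h1 g hg
  rw [pow_comp, X_comp] at h2
  rw [Wn]
  exact Submodule.mem_sup_right h2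

theorem elt1 {c : ℕ} (hc : 1 ≤ c) :
    (X : Polynomial k) ^ c + X ^ (c * Fintype.card k ^ n) ∈ Wn k n := by
  have h := comp_mem_Wn_left n (X_pow_mem_A0 (k := k) hc)
  rwa [← pow_mul] at h

theorem elt2 {i j : ℕ} (hi : 1 ≤ i) (hj : 1 ≤ j) :
    (X : Polynomial k) ^ (i * Fintype.card k ^ n + j)
      + X ^ (j * Fintype.card k ^ n + i) ∈ Wn k n := by
  have h1 := comp_mem_Wn_right n ((A0 k).add_mem (X_pow_mem_A0 (k := k) hi) (X_pow_mem_A0 hj))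
  have h2 := comp_mem_Wn_right n (X_pow_mem_A0 (k := k) hi)
  have h3 := comp_mem_Wn_right n (X_pow_mem_A0 (k := k) hj)
  rw [pow_succ, add_pow_card_pow] at h1
  have e : (((X : Polynomial k)^i)^(Fintype.card k ^ n) + ((X : Polynomial k)^j)^(Fintype.card k ^ n))
        * (X^i + X^j) - (X^i)^(Fintype.card k ^ n + 1) - (X^j)^(Fintype.card k ^ n + 1)
      = X ^ (i * Fintype.card k ^ n + j) + X ^ (j * Fintype.card k ^ n + i) := by
    ring
  rw [← e]
  exact Submodule.sub_mem _ (Submodule.sub_mem _ h1 h2) h3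
variable (n : ℕ)

theorem pow2n_eq : Fintype.card k ^ n * Fintype.card k ^ n = Fintype.card k ^ (2*n) := by
  rw [← pow_add, two_mul]

theorem card_pow_pos : 1 ≤ Fintype.card k ^ n := Nat.one_le_pow _ _ Fintype.card_pos

theorem eltD {c : ℕ} (hc : 1 ≤ c) :
    (X : Polynomial k) ^ c - X ^ (c * Fintype.card k ^ (2*n)) ∈ Wn k n := by
  have h1 := elt1 n (k := k) hc
  have h2 := elt1 n (k := k) (show 1 ≤ c * Fintype.card k ^ n from
    Nat.one_le_iff_ne_zero.mpr (by
      have := card_pow_pos (k := k) n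
      positivity))
  rw [show c * Fintype.card k ^ n * Fintype.card k ^ n = c * Fintype.card k ^ (2*n) by
    rw [← pow2n_eq]; ring] at h2
  have e : (X : Polynomial k) ^ c - X ^ (c * Fintype.card k ^ (2*n))
      = ((X : Polynomial k) ^ c + X ^ (c * Fintype.card k ^ n))
        - (X ^ (c * Fintype.card k ^ n) + X ^ (c * Fintype.card k ^ (2*n))) := by ring
  rw [e]
  exact Submodule.sub_mem _ h1 h2

theorem eltS {d : ℕ} (hd : 1 ≤ d) :
    (X : Polynomial k) ^ (Fintype.card k ^ n + d + 1)
      - X ^ (Fintype.card k ^ n + d + Fintype.card k ^ (2*n)) ∈ Wn k n := by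
  have h1 := elt2 n (k := k) (le_refl 1) (show 1 ≤ d + 1 by omega)
  have h2 := elt2 n (k := k) (show 1 ≤ 1 + Fintype.card k ^ n by omega) hd
  rw [show 1 * Fintype.card k ^ n + (d+1) = Fintype.card k ^ n + d + 1 by ring,
    show (d+1) * Fintype.card k ^ n + 1 = d * Fintype.card k ^ n + (1 + Fintype.card k ^ n) by ring] at h1
  rw [show (1 + Fintype.card k ^ n) * Fintype.card k ^ n + d
      = Fintype.card k ^ n + d + Fintype.card k ^ (2*n) by rw [← pow2n_eq]; ring,
    show d * Fintype.card k ^ n + (1 + Fintype.card k ^ n)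
      = d * Fintype.card k ^ n + (1 + Fintype.card k ^ n) from rfl] at h2
  have e : (X : Polynomial k) ^ (Fintype.card k ^ n + d + 1)
        - X ^ (Fintype.card k ^ n + d + Fintype.card k ^ (2*n))
      = ((X : Polynomial k) ^ (Fintype.card k ^ n + d + 1)
          + X ^ (d * Fintype.card k ^ n + (1 + Fintype.card k ^ n)))
        - (X ^ (Fintype.card k ^ n + d + Fintype.card k ^ (2*n))
          + X ^ (d * Fintype.card k ^ n + (1 + Fintype.card k ^ n))) := by ring
  rw [e]
  exact Submodule.sub_mem _ h1 h2

theorem eltChain (t : ℕ) {d : ℕ} (hd : 1 ≤ d) :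
    (X : Polynomial k) ^ (Fintype.card k ^ n + d + 1)
      - X ^ (Fintype.card k ^ n + d + 1 + t * (Fintype.card k ^ (2*n) - 1)) ∈ Wn k n := by
  obtain ⟨s, hs⟩ : ∃ s, Fintype.card k ^ (2*n) = s + 1 :=
    ⟨Fintype.card k ^ (2*n) - 1, by have := card_pow_pos (k := k) (2*n); omega⟩
  rw [hs, Nat.add_sub_cancel]
  induction t with
  | zero => simp
  | succ t ih =>
    have h2 := eltS n (k := k) (show 1 ≤ d + t * s by omega)
    rw [hs] at h2
    rw [show Fintype.card k ^ n + (d + t * s) + 1 = Fintype.card k ^ n + d + 1 + t * s by ring,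
      show Fintype.card k ^ n + (d + t * s) + (s + 1)
        = Fintype.card k ^ n + d + 1 + (t+1) * s by ring] at h2
    have e : (X : Polynomial k) ^ (Fintype.card k ^ n + d + 1)
          - X ^ (Fintype.card k ^ n + d + 1 + (t+1) * s)
        = ((X : Polynomial k) ^ (Fintype.card k ^ n + d + 1)
            - X ^ (Fintype.card k ^ n + d + 1 + t * s))
          + (X ^ (Fintype.card k ^ n + d + 1 + t * s)
            - X ^ (Fintype.card k ^ n + d + 1 + (t+1) * s)) := by ring
    rw [e]
    exact Submodule.add_mem _ ih h2

theorem eltG (hm : 2 ≤ Fintype.card k ^ n) (r : ℕ) :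
    (X : Polynomial k) ^ (r + 1) - X ^ (Fintype.card k ^ (2*n) + r) ∈ Wn k n := by
  have hb : Fintype.card k ^ n + 2 ≤ Fintype.card k ^ (2*n) := by
    rw [← pow2n_eq]
    nlinarith
  have h1 := eltD n (k := k) (show 1 ≤ r + 1 by omega)
  have hd1 : 1 ≤ Fintype.card k ^ (2*n) + r - Fintype.card k ^ n - 1 := by omega
  have h2 := eltChain n (k := k) r hd1
  rw [show Fintype.card k ^ n + (Fintype.card k ^ (2*n) + r - Fintype.card k ^ n - 1) + 1
      = Fintype.card k ^ (2*n) + r by omega] at h2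
  rw [show Fintype.card k ^ (2*n) + r + r * (Fintype.card k ^ (2*n) - 1)
      = (r+1) * Fintype.card k ^ (2*n) by
    obtain ⟨s, hs⟩ : ∃ s, Fintype.card k ^ (2*n) = s + 1 := ⟨Fintype.card k ^ (2*n) - 1, by omega⟩
    rw [hs, Nat.add_sub_cancel]; ring] at h2
  have e : (X : Polynomial k) ^ (r + 1) - X ^ (Fintype.card k ^ (2*n) + r)
      = ((X : Polynomial k) ^ (r+1) - X ^ ((r+1) * Fintype.card k ^ (2*n)))
        - (X ^ (Fintype.card k ^ (2*n) + r) - X ^ ((r+1) * Fintype.card k ^ (2*n))) := by ring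
  rw [e]
  exact Submodule.sub_mem _ h1 h2

theorem MU_le_Wn (hm : 2 ≤ Fintype.card k ^ n) : MU k n ≤ Wn k n := by
  intro f hf
  obtain ⟨e, rfl⟩ := mem_MU.mp hf
  clear hf
  induction e using Polynomial.induction_on' with
  | add p q hp hq => rw [mul_add]; exact Submodule.add_mem _ hp hq
  | monomial r a =>
    have heq : (X - X ^ (Fintype.card k ^ (2*n)) : Polynomial k) * Polynomial.monomial r a
        = a • ((X : Polynomial k) ^ (r + 1) - X ^ (Fintype.card k ^ (2*n) + r)) := by
      rw [← C_mul_X_pow_eq_monomial, smul_eq_C_mul]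
      ring
    rw [heq]
    exact Submodule.smul_mem _ _ (eltG n hm r)

theorem span_En_le_Wn : Submodule.span k (En k n) ≤ Wn k n := by
  rw [Submodule.span_le]
  rintro f (⟨i, j, hji, him, rfl⟩ | ⟨i, h1, h2, rfl⟩)
  · rcases Nat.eq_zero_or_pos j with rfl | hj
    · have h := elt1 n (k := k) (show 1 ≤ i by omega)
      rw [show i * Fintype.card k ^ n + 0 = i * Fintype.card k ^ n by ring,
        show i + 0 * Fintype.card k ^ n = i by ring]
      rw [add_comm]
      exact h
    · have h := elt2 n (k := k) (show 1 ≤ i by omega) hj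
      rwa [show j * Fintype.card k ^ n + i = i + j * Fintype.card k ^ n by ring] at h
  · have h := comp_mem_Wn_right n (k := k) (X_pow_mem_A0 h1)
    rwa [← pow_mul, show i * (Fintype.card k ^ n + 1) = (Fintype.card k ^ n + 1) * i by ring] at h
variable (n : ℕ)

theorem X_mem_A0 : (X : Polynomial k) ∈ A0 k := by
  have := X_pow_mem_A0 (k := k) (le_refl 1)
  rwa [pow_one] at this

theorem TSp_single_le {f : Polynomial k} (hf : f ∈ A0 k) :
    TSp k {f} ≤ Submodule.span k {h | ∃ g ∈ A0 k, h = f.comp g} := by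
  apply TSp_le
  · constructor
    · rw [Submodule.span_le]
      rintro h ⟨g, hg, rfl⟩
      exact comp_mem_A0 hf hg
    · intro p hp g hg
      induction hp using Submodule.span_induction with
      | mem x hx =>
        obtain ⟨g', hg', rfl⟩ := hx
        exact Submodule.subset_span ⟨g'.comp g, comp_mem_A0 hg' hg, comp_assoc f g' g⟩
      | zero => rw [zero_comp]; exact Submodule.zero_mem _
      | add x y hx hy ihx ihy => rw [add_comp]; exact Submodule.add_mem _ ihx ihy
      | smul a x hx ih => rw [smul_comp]; exact Submodule.smul_mem _ _ ih
  · intro x hx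
    rw [Set.mem_singleton_iff] at hx
    subst hx
    exact Submodule.subset_span ⟨X, X_mem_A0, comp_X.symm⟩

theorem exists_reduce (N c : ℕ) (hN : 1 ≤ N) (hc : 1 ≤ c) :
    ∃ c', 1 ≤ c' ∧ c' ≤ N ∧ c ≡ c' [MOD N] := by
  refine ⟨(c-1) % N + 1, by omega, ?_, ?_⟩
  · have := Nat.mod_lt (c-1) (show 0 < N by omega)
    omega
  · have h2 := (Nat.mod_modEq (c-1) N).add_right 1
    rw [Nat.sub_add_cancel hc] at h2
    exact h2.symm

theorem modeq_sq (a b : ℕ) :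
    a * Fintype.card k ^ (2*n) + b ≡ a + b [MOD Fintype.card k ^ (2*n) - 1] := by
  have hpos : 1 ≤ Fintype.card k ^ (2*n) := card_pow_pos (2*n)
  have h1 : (Fintype.card k ^ (2*n) : ℕ) ≡ 1 [MOD Fintype.card k ^ (2*n) - 1] :=
    ((Nat.modEq_iff_dvd' hpos).mpr (dvd_refl _)).symm
  calc a * Fintype.card k ^ (2*n) + b
      ≡ a * 1 + b [MOD Fintype.card k ^ (2*n) - 1] := (h1.mul_left a).add_right b
    _ = a + b := by ring

theorem pair_mem {c1 c2 e1 e2 : ℕ} (hc1 : 1 ≤ c1) (hc2 : 1 ≤ c2) (he1 : 1 ≤ e1) (he2 : 1 ≤ e2)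
    (h1 : c1 ≡ e1 [MOD Fintype.card k ^ (2*n) - 1])
    (h2 : c2 ≡ e2 [MOD Fintype.card k ^ (2*n) - 1])
    (h : (X:Polynomial k)^e1 + X^e2 ∈ Submodule.span k (En k n) ⊔ MU k n) :
    (X:Polynomial k)^c1 + X^c2 ∈ Submodule.span k (En k n) ⊔ MU k n := by
  have d1 : (X:Polynomial k)^c1 - X^e1 ∈ MU k n := mem_MU.mpr (w_dvd_pow_sub_pow n hc1 he1 h1)
  have d2 : (X:Polynomial k)^c2 - X^e2 ∈ MU k n := mem_MU.mpr (w_dvd_pow_sub_pow n hc2 he2 h2)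
  have e : (X:Polynomial k)^c1 + X^c2
      = ((X^e1 + X^e2) + (X^c1 - X^e1)) + (X^c2 - X^e2) := by ring
  rw [e]
  exact Submodule.add_mem _
    (Submodule.add_mem _ h (Submodule.mem_sup_right d1)) (Submodule.mem_sup_right d2)

theorem red1 (hm : 2 ≤ Fintype.card k ^ n) {c : ℕ} (hc : 1 ≤ c) :
    (X:Polynomial k)^c + X^(c * Fintype.card k ^ n)
      ∈ Submodule.span k (En k n) ⊔ MU k n := by
  have hsq : Fintype.card k ^ n * Fintype.card k ^ n = Fintype.card k ^ (2*n) := pow2n_eq n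
  have hM2 : 4 ≤ Fintype.card k ^ (2*n) := by nlinarith
  obtain ⟨c', hc'1, hc'le, hcc'⟩ := exists_reduce (Fintype.card k ^ (2*n) - 1) c (by omega) hc
  set m := Fintype.card k ^ n with hmdef
  obtain ⟨i, j, hdm, hjm, him⟩ : ∃ i j, i * m + j = c' ∧ j < m ∧ i < m := by
    refine ⟨c'/m, c'%m, ?_, Nat.mod_lt _ (by omega), ?_⟩
    · rw [mul_comm]; exact Nat.div_add_mod c' m
    · have h9 : c' < m * m := by rw [hsq]; omega
      exact (Nat.div_lt_iff_lt_mul (by omega : 0 < m)).mpr h9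
  have hcm1 : 1 ≤ c * m := by nlinarith
  have hcong1 : c ≡ i * m + j [MOD Fintype.card k ^ (2*n) - 1] := hdm ▸ hcc'
  have hcong2 : c * m ≡ i + j * m [MOD Fintype.card k ^ (2*n) - 1] := by
    have hA := hcc'.mul_right m
    have hB : c' * m = i * Fintype.card k ^ (2*n) + j * m := by rw [← hsq, ← hdm]; ring
    rw [hB] at hA
    exact hA.trans (modeq_sq n i (j*m))
  rcases lt_trichotomy i j with hij | hij | hij
  · have hj1 : 1 ≤ j := by omega
    have base : (X:Polynomial k)^(j*m+i) + X^(j+i*m) ∈ Submodule.span k (En k n) :=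
      Submodule.subset_span (Or.inl ⟨j, i, hij, hjm, rfl⟩)
    have h := pair_mem n (c1 := c*m) (c2 := c) (e1 := j*m+i) (e2 := j+i*m)
      hcm1 hc (by nlinarith) (by omega)
      (by rwa [show j*m+i = i + j*m by ring]) (by rwa [show j+i*m = i*m+j by ring])
      (Submodule.mem_sup_left base)
    rwa [add_comm] at h
  · subst hij
    have hi1 : 1 ≤ i := by
      by_contra h
      have : i = 0 := by omega
      subst this
      simp at hdm
      omega
    have base : (X:Polynomial k)^((m+1)*i) ∈ Submodule.span k (En k n) :=
      Submodule.subset_span (Or.inr ⟨i, hi1, by omega, rfl⟩)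
    exact pair_mem n (c1 := c) (c2 := c*m) (e1 := (m+1)*i) (e2 := (m+1)*i)
      hc hcm1 (by nlinarith) (by nlinarith)
      (by rwa [show (m+1)*i = i*m+i by ring]) (by rwa [show (m+1)*i = i+i*m by ring])
      (Submodule.add_mem _ (Submodule.mem_sup_left base) (Submodule.mem_sup_left base))
  · have hi1 : 1 ≤ i := by omega
    have base : (X:Polynomial k)^(i*m+j) + X^(i+j*m) ∈ Submodule.span k (En k n) :=
      Submodule.subset_span (Or.inl ⟨i, j, hij, him, rfl⟩)
    exact pair_mem n (c1 := c) (c2 := c*m) (e1 := i*m+j) (e2 := i+j*m)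
      hc hcm1 (by nlinarith) (by omega) hcong1 hcong2 (Submodule.mem_sup_left base)

theorem red2 (hm : 2 ≤ Fintype.card k ^ n) {a b : ℕ} (ha : 1 ≤ a) (hb : 1 ≤ b) :
    (X:Polynomial k)^(a * Fintype.card k ^ n + b) + X^(b * Fintype.card k ^ n + a)
      ∈ Submodule.span k (En k n) ⊔ MU k n := by
  set m := Fintype.card k ^ n with hmdef
  have hsq : m * m = Fintype.card k ^ (2*n) := pow2n_eq n
  have hs1 : 1 ≤ a*m+b := by nlinarith
  have h := red1 n hm hs1
  apply pair_mem n (c1 := a*m+b) (c2 := b*m+a) (e1 := a*m+b) (e2 := (a*m+b)*m)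
    hs1 (by nlinarith) hs1 (by nlinarith) Nat.ModEq.rfl ?_ h
  have hB : (a*m+b)*m = a * Fintype.card k ^ (2*n) + b*m := by rw [← hsq]; ring
  rw [hB]
  rw [show b*m+a = a + b*m by ring]
  exact (modeq_sq n a (b*m)).symm

theorem red3 (hm : 2 ≤ Fintype.card k ^ n) {c : ℕ} (hc : 1 ≤ c) :
    (X:Polynomial k)^((Fintype.card k ^ n + 1) * c)
      ∈ Submodule.span k (En k n) ⊔ MU k n := by
  set m := Fintype.card k ^ n with hmdef
  have hsq : m * m = Fintype.card k ^ (2*n) := pow2n_eq n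
  obtain ⟨u, hu1, hule, hcu⟩ := exists_reduce (m - 1) c (by omega) hc
  have base : (X:Polynomial k)^((m+1)*u) ∈ Submodule.span k (En k n) :=
    Submodule.subset_span (Or.inr ⟨u, hu1, hule, rfl⟩)
  have hfac : (m+1) * (m-1) = Fintype.card k ^ (2*n) - 1 := by
    rw [← hsq]
    have h5 : m * m = (m+1)*(m-1) + 1 := by
      obtain ⟨s, hs⟩ := Nat.exists_eq_add_of_le hm
      rw [show m - 1 = s + 1 by omega, hs]
      ring
    omega
  have hcong : (m+1)*c ≡ (m+1)*u [MOD Fintype.card k ^ (2*n) - 1] := by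
    rw [← hfac]
    exact hcu.mul_left' (m+1)
  have d : (X:Polynomial k)^((m+1)*c) - X^((m+1)*u) ∈ MU k n :=
    mem_MU.mpr (w_dvd_pow_sub_pow n (by nlinarith) (by nlinarith) hcong)
  have e : (X:Polynomial k)^((m+1)*c)
      = X^((m+1)*u) + (X^((m+1)*c) - X^((m+1)*u)) := by ring
  rw [e]
  exact Submodule.add_mem _ (Submodule.mem_sup_left base) (Submodule.mem_sup_right d)
variable (n : ℕ)

theorem linA (hm : 2 ≤ Fintype.card k ^ n) {g : Polynomial k} (hg : g ∈ A0 k) :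
    g + g ^ (Fintype.card k ^ n) ∈ Submodule.span k (En k n) ⊔ MU k n := by
  rw [A0_eq_span] at hg
  induction hg using Submodule.span_induction with
  | mem x hx =>
    obtain ⟨c, hc, rfl⟩ := hx
    rw [← pow_mul]
    exact red1 n hm hc
  | zero =>
    rw [zero_pow (by omega : Fintype.card k ^ n ≠ 0), add_zero]
    exact Submodule.zero_mem _
  | add x y hx hy ihx ihy =>
    rw [add_pow_card_pow]
    have e : (x + y) + (x ^ (Fintype.card k ^ n) + y ^ (Fintype.card k ^ n))
        = (x + x ^ (Fintype.card k ^ n)) + (y + y ^ (Fintype.card k ^ n)) := by ring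
    rw [e]
    exact Submodule.add_mem _ ihx ihy
  | smul a x hx ih =>
    rw [smul_pow_card_pow, ← smul_add]
    exact Submodule.smul_mem _ _ ih

theorem crossM (hm : 2 ≤ Fintype.card k ^ n) {c : ℕ} (hc : 1 ≤ c) {h : Polynomial k}
    (hh : h ∈ A0 k) :
    ((X:Polynomial k)^c) ^ (Fintype.card k ^ n) * h + h ^ (Fintype.card k ^ n) * X^c
      ∈ Submodule.span k (En k n) ⊔ MU k n := by
  rw [A0_eq_span] at hh
  induction hh using Submodule.span_induction with
  | mem y hy =>
    obtain ⟨d, hd, rfl⟩ := hy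
    have e : ((X:Polynomial k)^c) ^ (Fintype.card k ^ n) * X^d
          + ((X:Polynomial k)^d) ^ (Fintype.card k ^ n) * X^c
        = X^(c * Fintype.card k ^ n + d) + X^(d * Fintype.card k ^ n + c) := by
      rw [← pow_mul, ← pow_mul, ← pow_add, ← pow_add]
    rw [e]
    exact red2 n hm hc hd
  | zero =>
    rw [zero_pow (by omega : Fintype.card k ^ n ≠ 0), mul_zero, zero_mul, add_zero]
    exact Submodule.zero_mem _
  | add y z hy hz ihy ihz =>
    rw [add_pow_card_pow]
    have e : ((X:Polynomial k)^c) ^ (Fintype.card k ^ n) * (y + z)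
          + (y ^ (Fintype.card k ^ n) + z ^ (Fintype.card k ^ n)) * X^c
        = (((X:Polynomial k)^c) ^ (Fintype.card k ^ n) * y + y ^ (Fintype.card k ^ n) * X^c)
          + (((X:Polynomial k)^c) ^ (Fintype.card k ^ n) * z + z ^ (Fintype.card k ^ n) * X^c) := by
      ring
    rw [e]
    exact Submodule.add_mem _ ihy ihz
  | smul a y hy ih =>
    rw [smul_pow_card_pow]
    have e : ((X:Polynomial k)^c) ^ (Fintype.card k ^ n) * (a • y)
          + (a • y ^ (Fintype.card k ^ n)) * X^c
        = a • (((X:Polynomial k)^c) ^ (Fintype.card k ^ n) * y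
            + y ^ (Fintype.card k ^ n) * X^c) := by
      rw [smul_eq_C_mul, smul_eq_C_mul, smul_eq_C_mul]; ring
    rw [e]
    exact Submodule.smul_mem _ _ ih

theorem cross (hm : 2 ≤ Fintype.card k ^ n) {g h : Polynomial k}
    (hg : g ∈ A0 k) (hh : h ∈ A0 k) :
    g ^ (Fintype.card k ^ n) * h + h ^ (Fintype.card k ^ n) * g
      ∈ Submodule.span k (En k n) ⊔ MU k n := by
  rw [A0_eq_span] at hg
  induction hg using Submodule.span_induction with
  | mem x hx =>
    obtain ⟨c, hc, rfl⟩ := hx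
    exact crossM n hm hc hh
  | zero =>
    rw [zero_pow (by omega : Fintype.card k ^ n ≠ 0), zero_mul, mul_zero, add_zero]
    exact Submodule.zero_mem _
  | add x y hx hy ihx ihy =>
    rw [add_pow_card_pow]
    have e : (x ^ (Fintype.card k ^ n) + y ^ (Fintype.card k ^ n)) * h
          + h ^ (Fintype.card k ^ n) * (x + y)
        = (x ^ (Fintype.card k ^ n) * h + h ^ (Fintype.card k ^ n) * x)
          + (y ^ (Fintype.card k ^ n) * h + h ^ (Fintype.card k ^ n) * y) := by ring
    rw [e]
    exact Submodule.add_mem _ ihx ihy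
  | smul a x hx ih =>
    rw [smul_pow_card_pow]
    have e : (a • x ^ (Fintype.card k ^ n)) * h + h ^ (Fintype.card k ^ n) * (a • x)
        = a • (x ^ (Fintype.card k ^ n) * h + h ^ (Fintype.card k ^ n) * x) := by
      rw [smul_eq_C_mul, smul_eq_C_mul, smul_eq_C_mul]; ring
    rw [e]
    exact Submodule.smul_mem _ _ ih

theorem linB (hm : 2 ≤ Fintype.card k ^ n) {g : Polynomial k} (hg : g ∈ A0 k) :
    g ^ (Fintype.card k ^ n + 1) ∈ Submodule.span k (En k n) ⊔ MU k n := by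
  rw [A0_eq_span] at hg
  induction hg using Submodule.span_induction with
  | mem x hx =>
    obtain ⟨c, hc, rfl⟩ := hx
    rw [← pow_mul, show c * (Fintype.card k ^ n + 1) = (Fintype.card k ^ n + 1) * c by ring]
    exact red3 n hm hc
  | zero =>
    rw [zero_pow (by omega : Fintype.card k ^ n + 1 ≠ 0)]
    exact Submodule.zero_mem _
  | add x y hx hy ihx ihy =>
    have hx' : x ∈ A0 k := by rw [A0_eq_span]; exact hx
    have hy' : y ∈ A0 k := by rw [A0_eq_span]; exact hy
    rw [pow_succ, add_pow_card_pow]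
    have e : (x ^ (Fintype.card k ^ n) + y ^ (Fintype.card k ^ n)) * (x + y)
        = x ^ (Fintype.card k ^ n + 1) + y ^ (Fintype.card k ^ n + 1)
          + (x ^ (Fintype.card k ^ n) * y + y ^ (Fintype.card k ^ n) * x) := by
      rw [pow_succ, pow_succ]; ring
    rw [e]
    exact Submodule.add_mem _ (Submodule.add_mem _ ihx ihy) (cross n hm hx' hy')
  | smul a x hx ih =>
    rw [_root_.smul_pow]
    exact Submodule.smul_mem _ _ ih

theorem Wn_le_sup (hm : 2 ≤ Fintype.card k ^ n) :
    Wn k n ≤ Submodule.span k (En k n) ⊔ MU k n := by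
  rw [Wn]
  apply sup_le
  · refine le_trans (TSp_single_le (gen_left_mem_A0 n)) ?_
    rw [Submodule.span_le]
    rintro f ⟨g, hg, rfl⟩
    rw [add_comp, X_comp, pow_comp, X_comp]
    exact linA n hm hg
  · refine le_trans (TSp_single_le (gen_right_mem_A0 n)) ?_
    rw [Submodule.span_le]
    rintro f ⟨g, hg, rfl⟩
    rw [pow_comp, X_comp]
    exact linB n hm hg
variable (n : ℕ)

theorem sq_identity {m : ℕ} (hm : 2 ≤ m) : m * m = (m+1)*(m-1) + 1 := by
  obtain ⟨s, hs⟩ := Nat.exists_eq_add_of_le hm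
  rw [show m - 1 = s + 1 by omega, hs]
  ring

theorem span_En_le_degreeLT :
    Submodule.span k (En k n) ≤ Polynomial.degreeLT k (Fintype.card k ^ (2*n)) := by
  have hsq : Fintype.card k ^ n * Fintype.card k ^ n = Fintype.card k ^ (2*n) := pow2n_eq n
  rw [Submodule.span_le]
  rintro g (⟨i, j, hji, him, rfl⟩ | ⟨i, h1, h2, rfl⟩)
  · rw [SetLike.mem_coe, mem_degreeLT]
    apply lt_of_le_of_lt (degree_add_le _ _)
    rw [degree_X_pow, degree_X_pow, max_lt_iff]
    have e1 : i * Fintype.card k ^ n + j < Fintype.card k ^ (2*n) := by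
      rw [← hsq]
      have h3 := Nat.mul_le_mul_right (Fintype.card k ^ n) (show i + 1 ≤ Fintype.card k ^ n from him)
      rw [add_mul, one_mul] at h3
      omega
    have e2 : i + j * Fintype.card k ^ n < Fintype.card k ^ (2*n) := by
      rw [← hsq]
      have h3 := Nat.mul_le_mul_right (Fintype.card k ^ n) (show j + 1 ≤ Fintype.card k ^ n by omega)
      rw [add_mul, one_mul] at h3
      omega
    constructor <;> exact_mod_cast ‹_›
  · rw [SetLike.mem_coe, mem_degreeLT, degree_X_pow]
    have hm : 2 ≤ Fintype.card k ^ n := by omega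
    have e1 : (Fintype.card k ^ n + 1) * i < Fintype.card k ^ (2*n) := by
      rw [← hsq, sq_identity hm]
      have h3 := Nat.mul_le_mul (le_refl (Fintype.card k ^ n + 1)) h2
      omega
    exact_mod_cast e1

theorem span_inf_MU (hm : 2 ≤ Fintype.card k ^ n) :
    Submodule.span k (En k n) ⊓ MU k n = ⊥ := by
  have hsq : Fintype.card k ^ n * Fintype.card k ^ n = Fintype.card k ^ (2*n) := pow2n_eq n
  have hM2 : 2 ≤ Fintype.card k ^ (2*n) := by nlinarith
  rw [eq_bot_iff]
  rintro f ⟨hf1, hf2⟩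
  rw [Submodule.mem_bot]
  by_contra hne
  obtain ⟨e, hfe⟩ := mem_MU.mp hf2
  have he0 : e ≠ 0 := by
    rintro rfl
    rw [mul_zero] at hfe
    exact hne hfe
  have h1x : (X : Polynomial k).degree < ((X : Polynomial k) ^ (Fintype.card k ^ (2*n))).degree := by
    rw [degree_X, degree_X_pow]
    exact_mod_cast hM2
  have hwdeg : (X - X ^ (Fintype.card k ^ (2*n)) : Polynomial k).degree
      = (Fintype.card k ^ (2*n) : ℕ) := by
    rw [degree_sub_eq_right_of_degree_lt h1x, degree_X_pow]
  have hdegf : f.degree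
      = ((Fintype.card k ^ (2*n) + e.natDegree : ℕ) : WithBot ℕ) := by
    rw [hfe, degree_mul, hwdeg, Polynomial.degree_eq_natDegree he0]
    push_cast
    rfl
  have hlt := mem_degreeLT.mp (span_En_le_degreeLT n hf1)
  rw [hdegf] at hlt
  have : Fintype.card k ^ (2*n) + e.natDegree < Fintype.card k ^ (2*n) := by
    exact_mod_cast hlt
  omega
end TPf

/-- For each `n ≥ 1`, `W_n = V_n ⊕ U_n` where `V_n` is the linear span of `E_n`. -/
theorem Wn_eq_Vn_sup_Un (n : ℕ) (hn : 1 ≤ n) :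
    Wn k n = Submodule.span k (En k n) ⊔ Un k n ∧
      Submodule.span k (En k n) ⊓ Un k n = ⊥ := by
  have hq : 1 < Fintype.card k := Fintype.one_lt_card
  have hm : 2 ≤ Fintype.card k ^ n := by
    have := one_lt_pow' (M := ℕ) hq (show n ≠ 0 by omega)
    omega
  refine ⟨?_, ?_⟩
  · rw [TPf.Un_eq_MU]
    exact le_antisymm (TPf.Wn_le_sup n hm)
      (sup_le (TPf.span_En_le_Wn n) (TPf.MU_le_Wn n hm))
  · rw [TPf.Un_eq_MU]
    exact TPf.span_inf_MU n hm
end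

section
/- For each n ≥ 1, the quotient k-vector space k[x]₀/U_n has dimension q^{2n} − 1. -/
open Polynomial

variable (k : Type*) [Field k] [Fintype k]

/-!
Because `g ↦ g ^ q` is the Frobenius of `k[x]`, `g - g ^ (q ^ s) = g(x) - g(x ^ (q ^ s))` is divisible
by `x - x ^ (q ^ s)` for every polynomial `g`. So the principal ideal generated by `x - x ^ (q ^ (2n))`
is already closed under substitutions, and `U_n` is this ideal. It lies in `k[x]₀`, which has
codimension `1` in `k[x]`, while the ideal has codimension `q ^ (2n)` in `k[x]`.
-/

section Field

variable {K : Type*} [Field K]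

theorem mem_A0_iff_s7 {f : K[X]} : f ∈ A0 K ↔ f.coeff 0 = 0 := by
  rw [A0, LinearMap.mem_ker, AlgHom.toLinearMap_apply, coe_aeval_eq_eval,
    coeff_zero_eq_eval_zero]

theorem coeff_zero_X_sub_X_pow {N : ℕ} (hN : N ≠ 0) : (X - X ^ N : K[X]).coeff 0 = 0 := by
  simp [coeff_X_pow, hN.symm]

theorem IsTIdeal.mul_mem {V : Submodule K K[X]} (hV : IsTIdeal K V) {f : K[X]} (hf : f ∈ V)
    (g : K[X]) : g * f ∈ V := by
  have hg : g - C (g.coeff 0) ∈ A0 K := by simp [mem_A0_iff_s7]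
  have hsplit : g * f = (g - C (g.coeff 0)) * f + g.coeff 0 • f := by
    rw [smul_eq_C_mul]; ring
  rw [hsplit]
  exact add_mem (hV.2 f hf _ hg) (V.smul_mem _ hf)

theorem TId_singleton_eq_span {f : K[X]}
    (hf : IsTIdeal K ((Ideal.span {f}).restrictScalars K)) :
    TId K {f} = (Ideal.span {f}).restrictScalars K := by
  refine le_antisymm (sInf_le ⟨hf, by simp⟩) ?_
  refine le_sInf fun V ⟨hV, hfV⟩ g hg => ?_
  obtain ⟨h, rfl⟩ := Ideal.mem_span_singleton'.1 hg
  exact hV.mul_mem (hfV rfl) h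

theorem finrank_quotient_comap_subtype_add_finrank_quotient {V : Type*} [AddCommGroup V]
    [Module K V] {N A : Submodule K V} (hNA : N ≤ A) [FiniteDimensional K (V ⧸ N)] :
    Module.finrank K (A ⧸ N.comap A.subtype) + Module.finrank K (V ⧸ A) =
      Module.finrank K (V ⧸ N) := by
  have hker : LinearMap.ker (N.mkQ ∘ₗ A.subtype) = N.comap A.subtype := by
    rw [LinearMap.ker_comp, Submodule.ker_mkQ]
  have hrange : LinearMap.range (N.mkQ ∘ₗ A.subtype) = A.map N.mkQ := by
    rw [LinearMap.range_comp, Submodule.range_subtype]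
  rw [((Submodule.quotEquivOfEq _ _ hker.symm).trans
      ((N.mkQ ∘ₗ A.subtype).quotKerEquivRange.trans
        (LinearEquiv.ofEq _ _ hrange))).finrank_eq,
    ← (Submodule.quotientQuotientEquivQuotient N A hNA).finrank_eq, add_comm,
    Submodule.finrank_quotient_add_finrank]

theorem finrank_quotient_A0 : Module.finrank K (K[X] ⧸ A0 K) = 1 := by
  have hsurj : Function.Surjective (aeval (R := K) (0 : K)).toLinearMap := fun c => ⟨C c, by simp⟩
  exact ((aeval (R := K) (0 : K)).toLinearMap.quotKerEquivOfSurjective hsurj).finrank_eq.trans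
    (Module.finrank_self K)

theorem finrank_quotient_comap_span {P : K[X]} (hP : P ≠ 0) (hP0 : P.coeff 0 = 0) :
    Module.finrank K
        (A0 K ⧸ ((Ideal.span {P}).restrictScalars K).comap (A0 K).subtype) =
      P.natDegree - 1 := by
  have hle : (Ideal.span {P}).restrictScalars K ≤ A0 K := fun f hf => by
    obtain ⟨g, rfl⟩ := Ideal.mem_span_singleton'.1 hf
    rw [mem_A0_iff_s7, mul_coeff_zero, hP0, mul_zero]
  have hquot := (Submodule.Quotient.restrictScalarsEquiv K (Ideal.span {P})).finrank_eq
  rw [finrank_quotient_span_eq_natDegree] at hquot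
  have : FiniteDimensional K (K[X] ⧸ (Ideal.span {P}).restrictScalars K) :=
    (AdjoinRoot.powerBasis hP).finite
  have hsum := finrank_quotient_comap_subtype_add_finrank_quotient hle
  rw [finrank_quotient_A0, hquot] at hsum
  omega

end Field

section FiniteField

variable {K : Type*} [Field K] [Fintype K]

theorem FiniteField.expand_card_pow (f : K[X]) (s : ℕ) :
    expand K (Fintype.card K ^ s) f = f ^ Fintype.card K ^ s := by
  induction s with
  | zero => simp
  | succ s ih => rw [pow_succ, expand_mul, FiniteField.expand_card, map_pow, ih, pow_mul]

theorem X_sub_X_pow_card_pow_dvd (f : K[X]) (s : ℕ) :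
    X - X ^ Fintype.card K ^ s ∣ f - f ^ Fintype.card K ^ s := by
  have h := sub_dvd_eval_sub X (X ^ Fintype.card K ^ s) (f.map C)
  rwa [eval_map, eval_map, eval₂_C_X, ← comp, ← expand_eq_comp_X_pow,
    FiniteField.expand_card_pow] at h

theorem isTIdeal_span_X_sub_X_pow_card_pow (s : ℕ) :
    IsTIdeal K ((Ideal.span {X - X ^ Fintype.card K ^ s}).restrictScalars K) := by
  refine ⟨⟨fun f hf => ?_, fun f hf g _ => ?_⟩, fun f hf g _ => ?_⟩ <;>
    obtain ⟨h, rfl⟩ := Ideal.mem_span_singleton'.1 hf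
  · rw [mem_A0_iff_s7, mul_coeff_zero, coeff_zero_X_sub_X_pow (pow_pos Fintype.card_pos s).ne',
      mul_zero]
  · obtain ⟨c, hc⟩ := X_sub_X_pow_card_pow_dvd g s
    refine Ideal.mem_span_singleton'.2 ⟨h.comp g * c, ?_⟩
    rw [mul_comp, sub_comp, X_comp, pow_comp, X_comp, hc]
    ring
  · exact Ideal.mem_span_singleton'.2 ⟨g * h, mul_assoc g h _⟩

theorem Un_eq_span (n : ℕ) :
    Un K n = (Ideal.span {X - X ^ Fintype.card K ^ (2 * n)}).restrictScalars K :=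
  TId_singleton_eq_span (isTIdeal_span_X_sub_X_pow_card_pow _)

end FiniteField

/-- For each `n ≥ 1`, `dim k[x]₀/U_n = q^{2n} - 1`. -/
theorem finrank_quotient_Un (n : ℕ) (hn : 1 ≤ n) :
    Module.finrank k (↥(A0 k) ⧸ (Un k n).comap (A0 k).subtype) =
      Fintype.card k ^ (2 * n) - 1 := by
  have hN : 1 < Fintype.card k ^ (2 * n) := Nat.one_lt_pow (by omega) Fintype.one_lt_card
  have hdeg : (X - X ^ Fintype.card k ^ (2 * n) : k[X]).natDegree = Fintype.card k ^ (2 * n) := by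
    rw [natDegree_sub_eq_right_of_natDegree_lt] <;> simp [hN]
  have hP : (X - X ^ Fintype.card k ^ (2 * n) : k[X]) ≠ 0 := ne_zero_of_natDegree_gt (hdeg ▸ hN)
  rw [Un_eq_span, finrank_quotient_comap_span hP (coeff_zero_X_sub_X_pow (by omega)), hdeg]
end

section
/- For every n ≥ 1 and every u ∈ k[x]₀, x^{q^{2n}−1}·u − u ∈ U_n. -/
open Polynomial

variable (k : Type*) [Field k] [Fintype k]

/-- For every `n ≥ 1` and every `u ∈ k[x]₀`, `x^{q^{2n}-1} u - u ∈ U_n`. -/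
theorem X_pow_mul_sub_mem_Un (n : ℕ) (hn : 1 ≤ n) (u : Polynomial k) (hu : u ∈ A0 k) :
    X ^ (Fintype.card k ^ (2 * n) - 1) * u - u ∈ Un k n := by
  set m := Fintype.card k ^ (2 * n) with hm
  have hm1 : 1 ≤ m := Nat.one_le_pow _ _ Fintype.card_pos
  have hu0 : u.coeff 0 = 0 := by
    have : (aeval (0 : k)) u = 0 := hu
    simpa [coeff_zero_eq_eval_zero] using this
  obtain ⟨w, hw⟩ : X ∣ u := X_dvd_iff.mpr hu0
  set c := w.coeff 0 with hc
  have hw0 : w - C c ∈ A0 k := by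
    simp [A0, coeff_zero_eq_eval_zero, hc]
  have key : X ^ (m - 1) * u - u = c • (-(X - X ^ m) : Polynomial k) + (w - C c) * (-(X - X ^ m)) := by
    have hXm : X ^ (m - 1) * X = (X ^ m : Polynomial k) := by
      rw [← pow_succ, Nat.sub_add_cancel hm1]
    rw [hw, smul_eq_C_mul]
    rw [show X ^ (m - 1) * (X * w) = X ^ (m - 1) * X * w by ring, hXm]
    ring
  rw [key]
  simp only [Un, TId, Submodule.mem_sInf]
  rintro V ⟨⟨⟨hVle, -⟩, hideal⟩, hH⟩
  have hf : X - X ^ m ∈ V := hH (Set.mem_singleton _)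
  have hf' : -(X - X ^ m) ∈ V := V.neg_mem hf
  exact V.add_mem (V.smul_mem c hf') (hideal _ hf' _ hw0)
end

section
/- Let X and Y be nonempty sets with X ⊆ Y, and regard k⟨X⟩₀ as a subalgebra of k⟨Y⟩₀ via the natural embedding induced by the inclusion X ⊆ Y. Then for any subset U of k⟨X⟩₀, the T-space of k⟨X⟩₀ generated by U equals the intersection with k⟨X⟩₀ of the T-space of k⟨Y⟩₀ generated by U. -/
variable (k : Type*) [Field k] [Fintype k] (X : Type*)

/-- `k⟨X⟩₀`: the free non-unital associative `k`-algebra on `X`, identified with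
the augmentation submodule (elements with zero constant term) of the free
unital associative algebra `FreeAlgebra k X`. -/
noncomputable def AugF : Submodule k (FreeAlgebra k X) :=
  LinearMap.ker (FreeAlgebra.lift k (fun _ : X => (0 : k))).toLinearMap

/-- A `T`-space of `k⟨X⟩₀`: a `k`-linear subspace of `k⟨X⟩₀` invariant under all
substitutions `x ↦ g x` with each `g x ∈ k⟨X⟩₀` (equivalently, under all
non-unital `k`-algebra endomorphisms of `k⟨X⟩₀`). -/
def IsTSpaceF (V : Submodule k (FreeAlgebra k X)) : Prop :=
  V ≤ AugF k X ∧
    ∀ g : X → FreeAlgebra k X, (∀ x, g x ∈ AugF k X) →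
      ∀ v ∈ V, FreeAlgebra.lift k g v ∈ V

/-- `H^S`: the smallest `T`-space of `k⟨X⟩₀` containing `H`. -/
noncomputable def TSpF (H : Set (FreeAlgebra k X)) : Submodule k (FreeAlgebra k X) :=
  sInf {V | IsTSpaceF k X V ∧ H ⊆ V}

/-- A `T`-ideal of `k⟨X⟩₀`: a `T`-space that is also a (two-sided) ideal of `k⟨X⟩₀`. -/
def IsTIdealF (V : Submodule k (FreeAlgebra k X)) : Prop :=
  IsTSpaceF k X V ∧ ∀ v ∈ V, ∀ a ∈ AugF k X, a * v ∈ V ∧ v * a ∈ V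

/-- `H^T`: the smallest `T`-ideal of `k⟨X⟩₀` containing `H`. -/
noncomputable def TIdF (H : Set (FreeAlgebra k X)) : Submodule k (FreeAlgebra k X) :=
  sInf {V | IsTIdealF k X V ∧ H ⊆ V}

/-- `W_{n,X} = {x + x^{q^n}}^S + {x^{q^n+1}}^S` for a fixed generator `x ∈ X`. -/
noncomputable def WnF (x : X) (n : ℕ) : Submodule k (FreeAlgebra k X) :=
  TSpF k X {FreeAlgebra.ι k x + FreeAlgebra.ι k x ^ (Fintype.card k ^ n)} ⊔
    TSpF k X {FreeAlgebra.ι k x ^ (Fintype.card k ^ n + 1)}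

/-- `U_{n,X} = {x - x^{q^{2n}}}^T` for a fixed generator `x ∈ X`. -/
noncomputable def UnF (x : X) (n : ℕ) : Submodule k (FreeAlgebra k X) :=
  TIdF k X {FreeAlgebra.ι k x - FreeAlgebra.ι k x ^ (Fintype.card k ^ (2 * n))}


section Aux

variable {k}

lemma mem_augF_iff {Z : Type*} {a : FreeAlgebra k Z} :
    a ∈ AugF k Z ↔ FreeAlgebra.lift k (fun _ : Z => (0 : k)) a = 0 := by
  simp [AugF, LinearMap.mem_ker]

/-- A lift along functions with values in the augmentation submodule preserves it. -/
lemma lift_mem_augF {Z Z' : Type*} {f : Z → FreeAlgebra k Z'}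
    (hf : ∀ z, f z ∈ AugF k Z') {a : FreeAlgebra k Z} (ha : a ∈ AugF k Z) :
    FreeAlgebra.lift k f a ∈ AugF k Z' := by
  have hcomp : (FreeAlgebra.lift k (fun _ : Z' => (0 : k))).comp (FreeAlgebra.lift k f)
      = FreeAlgebra.lift k (fun _ : Z => (0 : k)) := by
    apply FreeAlgebra.hom_ext
    funext z
    have := (mem_augF_iff (k := k)).1 (hf z)
    simp [this]
  rw [mem_augF_iff] at ha ⊢
  calc FreeAlgebra.lift k (fun _ : Z' => (0 : k)) (FreeAlgebra.lift k f a)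
      = ((FreeAlgebra.lift k (fun _ : Z' => (0 : k))).comp (FreeAlgebra.lift k f)) a := rfl
    _ = FreeAlgebra.lift k (fun _ : Z => (0 : k)) a := by rw [hcomp]
    _ = 0 := ha

lemma isTSpaceF_augF {Z : Type*} : IsTSpaceF k Z (AugF k Z) :=
  ⟨le_rfl, fun _ hg _ hv => lift_mem_augF hg hv⟩

lemma subset_TSpF {Z : Type*} {H : Set (FreeAlgebra k Z)} : H ⊆ (TSpF k Z H : Set _) := by
  intro h hh
  simp only [TSpF, SetLike.mem_coe, Submodule.mem_sInf]
  exact fun V hV => hV.2 hh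

lemma TSpF_le {Z : Type*} {H : Set (FreeAlgebra k Z)} {V : Submodule k (FreeAlgebra k Z)}
    (hV : IsTSpaceF k Z V) (hHV : H ⊆ V) : TSpF k Z H ≤ V :=
  sInf_le ⟨hV, hHV⟩

lemma isTSpaceF_TSpF {Z : Type*} {H : Set (FreeAlgebra k Z)}
    (hH : H ⊆ (AugF k Z : Set _)) : IsTSpaceF k Z (TSpF k Z H) := by
  constructor
  · exact TSpF_le isTSpaceF_augF hH
  · intro g hg v hv
    simp only [TSpF, Submodule.mem_sInf] at hv ⊢
    intro V hV
    exact hV.1.2 g hg v (hv V hV)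

end Aux

/-- For nonempty sets `X ⊆ Y`, regarding `k⟨X⟩₀ ⊆ k⟨Y⟩₀` via the natural embedding,
the `T`-space of `k⟨X⟩₀` generated by `U ⊆ k⟨X⟩₀` equals the intersection with
`k⟨X⟩₀` of the `T`-space of `k⟨Y⟩₀` generated by `U`. -/
theorem TSpF_subset_eq_inf {Y : Type*} (Xs : Set Y) (hXs : Xs.Nonempty)
    (U : Set (FreeAlgebra k ↥Xs)) (hU : U ⊆ (AugF k ↥Xs : Set (FreeAlgebra k ↥Xs))) :
    Submodule.map
        (FreeAlgebra.lift k fun x : ↥Xs => FreeAlgebra.ι k (x : Y)).toLinearMap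
        (TSpF k ↥Xs U) =
      TSpF k Y
          (⇑(FreeAlgebra.lift k fun x : ↥Xs => FreeAlgebra.ι k (x : Y)) '' U) ⊓
        Submodule.map
          (FreeAlgebra.lift k fun x : ↥Xs => FreeAlgebra.ι k (x : Y)).toLinearMap
          (AugF k ↥Xs) := by
  classical
  obtain ⟨x₀, hx₀⟩ := hXs
  set e : FreeAlgebra k ↥Xs →ₐ[k] FreeAlgebra k Y :=
    FreeAlgebra.lift k fun x : ↥Xs => FreeAlgebra.ι k (x : Y) with he
  set ρ : Y → FreeAlgebra k ↥Xs :=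
    fun y => if h : y ∈ Xs then FreeAlgebra.ι k (⟨y, h⟩ : ↥Xs)
      else FreeAlgebra.ι k (⟨x₀, hx₀⟩ : ↥Xs) with hρ
  set r : FreeAlgebra k Y →ₐ[k] FreeAlgebra k ↥Xs := FreeAlgebra.lift k ρ with hr
  have hιaug : ∀ {Z : Type _} (z : Z), FreeAlgebra.ι k z ∈ AugF k Z := by
    intro Z z
    rw [mem_augF_iff, FreeAlgebra.lift_ι_apply]
  have heaug : ∀ {v}, v ∈ AugF k ↥Xs → e v ∈ AugF k Y :=
    fun hv => lift_mem_augF (fun x => hιaug _) hv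
  have hre : ∀ v, r (e v) = v := by
    have hcomp : r.comp e = AlgHom.id k (FreeAlgebra k ↥Xs) := by
      apply FreeAlgebra.hom_ext
      funext x
      simp only [AlgHom.coe_comp, Function.comp_apply, AlgHom.coe_id, id_eq, he, hr,
        FreeAlgebra.lift_ι_apply, hρ]
      rw [dif_pos x.2, Subtype.coe_eta]
    intro v
    calc r (e v) = (r.comp e) v := rfl
      _ = v := by rw [hcomp]; rfl
  have heU : e '' U ⊆ (AugF k Y : Set _) := by
    rintro _ ⟨u, hu, rfl⟩
    exact heaug (hU hu)
  apply le_antisymm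
  · apply le_inf
    · rw [Submodule.map_le_iff_le_comap]
      apply TSpF_le
      · constructor
        · intro v hv
          have h1 : e v ∈ AugF k Y := (isTSpaceF_TSpF heU).1 hv
          rw [mem_augF_iff] at h1 ⊢
          have hcomp : (FreeAlgebra.lift k (fun _ : Y => (0 : k))).comp e
              = FreeAlgebra.lift k (fun _ : ↥Xs => (0 : k)) := by
            apply FreeAlgebra.hom_ext
            funext x
            simp [he, FreeAlgebra.lift_ι_apply]
          have h2 : FreeAlgebra.lift k (fun _ : ↥Xs => (0 : k)) v
              = FreeAlgebra.lift k (fun _ : Y => (0 : k)) (e v) := by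
            rw [← hcomp]; rfl
          rw [h2]; exact h1
        · intro g hg v hv
          simp only [Submodule.mem_comap, AlgHom.toLinearMap_apply] at hv ⊢
          set gY : Y → FreeAlgebra k Y :=
            fun y => if h : y ∈ Xs then e (g ⟨y, h⟩) else FreeAlgebra.ι k y with hgY
          have hgYaug : ∀ y, gY y ∈ AugF k Y := by
            intro y
            by_cases h : y ∈ Xs
            · simp only [hgY]; rw [dif_pos h]; exact heaug (hg _)
            · simp only [hgY]; rw [dif_neg h]; exact hιaug _
          have hcomm : e (FreeAlgebra.lift k g v) = FreeAlgebra.lift k gY (e v) := by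
            have hcomp : e.comp (FreeAlgebra.lift k g)
                = (FreeAlgebra.lift k gY).comp e := by
              apply FreeAlgebra.hom_ext
              funext x
              simp only [AlgHom.coe_comp, Function.comp_apply, he,
                FreeAlgebra.lift_ι_apply, hgY]
              rw [dif_pos x.2, Subtype.coe_eta]
            calc e (FreeAlgebra.lift k g v) = (e.comp (FreeAlgebra.lift k g)) v := rfl
              _ = ((FreeAlgebra.lift k gY).comp e) v := by rw [hcomp]
              _ = FreeAlgebra.lift k gY (e v) := rfl
          rw [hcomm]
          exact (isTSpaceF_TSpF heU).2 gY hgYaug _ hv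
      · intro u hu
        simp only [Submodule.mem_comap, AlgHom.toLinearMap_apply, SetLike.mem_coe]
        exact subset_TSpF ⟨u, hu, rfl⟩
    · exact Submodule.map_mono (TSpF_le isTSpaceF_augF hU)
  · -- reverse inclusion
    set S : Set (FreeAlgebra k Y) :=
      {w | ∃ g : Y → FreeAlgebra k Y, (∀ y, g y ∈ AugF k Y) ∧
        ∃ u ∈ U, w = FreeAlgebra.lift k g (e u)} with hS
    have hUS : e '' U ⊆ S := by
      rintro _ ⟨u, hu, rfl⟩
      refine ⟨FreeAlgebra.ι k, fun y => hιaug _, u, hu, ?_⟩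
      have hid : FreeAlgebra.lift k (FreeAlgebra.ι k) = AlgHom.id k (FreeAlgebra k Y) := by
        apply FreeAlgebra.hom_ext
        funext y
        simp [FreeAlgebra.lift_ι_apply]
      rw [hid]; rfl
    have hspanT : IsTSpaceF k Y (Submodule.span k S) := by
      constructor
      · rw [Submodule.span_le]
        rintro _ ⟨g, hg, u, hu, rfl⟩
        exact lift_mem_augF hg (heaug (hU hu))
      · intro g' hg' v hv
        have hmap : Submodule.map (FreeAlgebra.lift k g').toLinearMap (Submodule.span k S)
            ≤ Submodule.span k S := by
          rw [Submodule.map_span_le]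
          rintro _ ⟨g, hg, u, hu, rfl⟩
          refine Submodule.subset_span
            ⟨fun y => FreeAlgebra.lift k g' (g y),
              fun y => lift_mem_augF hg' (hg y), u, hu, ?_⟩
          have hcomp : (FreeAlgebra.lift k g').comp (FreeAlgebra.lift k g)
              = FreeAlgebra.lift k (fun y => FreeAlgebra.lift k g' (g y)) := by
            apply FreeAlgebra.hom_ext
            funext y
            simp [FreeAlgebra.lift_ι_apply]
          calc (FreeAlgebra.lift k g').toLinearMap (FreeAlgebra.lift k g (e u))
              = ((FreeAlgebra.lift k g').comp (FreeAlgebra.lift k g)) (e u) := rfl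
            _ = FreeAlgebra.lift k (fun y => FreeAlgebra.lift k g' (g y)) (e u) := by
                rw [hcomp]
        exact hmap ⟨v, hv, rfl⟩
    have hWspan : TSpF k Y (e '' U) ≤ Submodule.span k S :=
      TSpF_le hspanT (hUS.trans Submodule.subset_span)
    have hrspan : Submodule.map r.toLinearMap (Submodule.span k S) ≤ TSpF k ↥Xs U := by
      rw [Submodule.map_span_le]
      rintro _ ⟨g, hg, u, hu, rfl⟩
      have hρaug : ∀ y, ρ y ∈ AugF k ↥Xs := by
        intro y
        simp only [hρ]
        by_cases h : y ∈ Xs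
        · rw [dif_pos h]; exact hιaug _
        · rw [dif_neg h]; exact hιaug _
      have hcomp : r.comp ((FreeAlgebra.lift k g).comp e)
          = FreeAlgebra.lift k (fun x : ↥Xs => r (g (x : Y))) := by
        apply FreeAlgebra.hom_ext
        funext x
        simp [he, hr, FreeAlgebra.lift_ι_apply]
      have hval : r.toLinearMap (FreeAlgebra.lift k g (e u))
          = FreeAlgebra.lift k (fun x : ↥Xs => r (g (x : Y))) u := by
        calc r.toLinearMap (FreeAlgebra.lift k g (e u))
            = (r.comp ((FreeAlgebra.lift k g).comp e)) u := rfl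
          _ = FreeAlgebra.lift k (fun x : ↥Xs => r (g (x : Y))) u := by rw [hcomp]
      rw [hval]
      exact (isTSpaceF_TSpF hU).2 _ (fun x => lift_mem_augF hρaug (hg _)) u (subset_TSpF hu)
    rintro w ⟨hw1, a, ha, rfl⟩
    refine ⟨a, ?_, rfl⟩
    have hwspan : (FreeAlgebra.lift k fun x : ↥Xs => FreeAlgebra.ι k (x : Y)).toLinearMap a
        ∈ Submodule.span k S := hWspan hw1
    have : r.toLinearMap
        ((FreeAlgebra.lift k fun x : ↥Xs => FreeAlgebra.ι k (x : Y)).toLinearMap a)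
        ∈ TSpF k ↥Xs U := hrspan ⟨_, hwspan, rfl⟩
    have heq : r.toLinearMap
        ((FreeAlgebra.lift k fun x : ↥Xs => FreeAlgebra.ι k (x : Y)).toLinearMap a) = a :=
      hre a
    rwa [heq] at this
end

section
/- Let X be a set of size at least two and let x ∈ X; regard k[x]₀ as a subalgebra of k[X]₀ via the natural inclusion. Then for any subset U of k[x]₀ and any f ∈ k[x]₀, f belongs to the T-space of k[x]₀ generated by U if and only if f belongs to the T-space of k[X]₀ generated by U. -/
open Polynomial

variable (k : Type*) [Field k] [Fintype k]

variable (X : Type*)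

/-- `k[X]₀`: the free non-unital commutative associative `k`-algebra on `X`,
identified with the polynomials in the variables `X` with zero constant term. -/
noncomputable def A0Mv : Submodule k (MvPolynomial X k) :=
  LinearMap.ker (MvPolynomial.aeval (fun _ : X => (0 : k))).toLinearMap

/-- A `T`-space of `k[X]₀`: a `k`-linear subspace of `k[X]₀` invariant under all
substitutions `z ↦ g z` with each `g z ∈ k[X]₀`. -/
def IsTSpaceMv (V : Submodule k (MvPolynomial X k)) : Prop :=
  V ≤ A0Mv k X ∧
    ∀ g : X → MvPolynomial X k, (∀ x, g x ∈ A0Mv k X) →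
      ∀ v ∈ V, MvPolynomial.aeval g v ∈ V

/-- The smallest `T`-space of `k[X]₀` containing `H`. -/
noncomputable def TSpMv (H : Set (MvPolynomial X k)) : Submodule k (MvPolynomial X k) :=
  sInf {V | IsTSpaceMv k X V ∧ H ⊆ V}

section Aux

variable {k : Type*} [Field k] [Fintype k] {X : Type*}

lemma mem_A0_iff' {f : Polynomial k} : f ∈ A0 k ↔ Polynomial.aeval (0 : k) f = 0 :=
  Iff.rfl

lemma mem_A0Mv_iff' {f : MvPolynomial X k} :
    f ∈ A0Mv k X ↔ MvPolynomial.aeval (fun _ : X => (0 : k)) f = 0 :=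
  Iff.rfl

lemma comp_mem_A0' {f g : Polynomial k} (hf : f ∈ A0 k) (hg : g ∈ A0 k) :
    f.comp g ∈ A0 k := by
  rw [mem_A0_iff'] at *
  rw [Polynomial.aeval_comp, hg, hf]

/-- generators for `TSp k U` -/
def SGen (U : Set (Polynomial k)) : Set (Polynomial k) :=
  {p | ∃ u ∈ U, ∃ g ∈ A0 k, p = u.comp g}

/-- generators for `TSpMv k X (ι '' U)` -/
def SGenMv (X : Type*) (U : Set (Polynomial k)) : Set (MvPolynomial X k) :=
  {p | ∃ u ∈ U, ∃ t ∈ A0Mv k X, p = Polynomial.aeval t u}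

lemma TSp_eq_span {U : Set (Polynomial k)} (hU : U ⊆ (A0 k : Set (Polynomial k))) :
    TSp k U = Submodule.span k (SGen U) := by
  apply le_antisymm
  · apply sInf_le
    constructor
    · constructor
      · rw [Submodule.span_le]
        rintro p ⟨u, hu, g, hg, rfl⟩
        exact comp_mem_A0' (hU hu) hg
      · intro f hf g hg
        induction hf using Submodule.span_induction with
        | mem p hp =>
          obtain ⟨u, hu, h, hh, rfl⟩ := hp
          rw [Polynomial.comp_assoc]
          exact Submodule.subset_span ⟨u, hu, h.comp g, comp_mem_A0' hh hg, rfl⟩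
        | zero => simpa using Submodule.zero_mem _
        | add a b _ _ ha hb => rw [Polynomial.add_comp]; exact Submodule.add_mem _ ha hb
        | smul c a _ ha => rw [Polynomial.smul_comp]; exact Submodule.smul_mem _ _ ha
    · intro u hu
      apply Submodule.subset_span
      refine ⟨u, hu, Polynomial.X, ?_, by simp⟩
      rw [mem_A0_iff']; simp
  · rw [Submodule.span_le]
    rintro p ⟨u, hu, g, hg, rfl⟩
    rw [SetLike.mem_coe, TSp]
    refine Submodule.mem_sInf.mpr ?_
    rintro V ⟨⟨_, hcomp⟩, hUV⟩
    exact hcomp u (hUV hu) g hg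

lemma TSpMv_eq_span (x : X) {U : Set (Polynomial k)}
    (hU : U ⊆ (A0 k : Set (Polynomial k))) :
    TSpMv k X
        (⇑(Polynomial.aeval (MvPolynomial.X x : MvPolynomial X k) :
            Polynomial k →ₐ[k] MvPolynomial X k) '' U)
      = Submodule.span k (SGenMv X U) := by
  apply le_antisymm
  · apply sInf_le
    constructor
    · constructor
      · rw [Submodule.span_le]
        rintro p ⟨u, hu, t, ht, rfl⟩
        rw [SetLike.mem_coe, mem_A0Mv_iff']
        rw [← Polynomial.aeval_algHom_apply (MvPolynomial.aeval (fun _ : X => (0 : k))) t u]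
        rw [mem_A0Mv_iff'] at ht
        rw [ht]
        exact mem_A0_iff'.mp (hU hu)
      · intro g hg v hv
        induction hv using Submodule.span_induction with
        | mem p hp =>
          obtain ⟨u, hu, t, ht, rfl⟩ := hp
          rw [← Polynomial.aeval_algHom_apply (MvPolynomial.aeval g) t u]
          refine Submodule.subset_span ⟨u, hu, MvPolynomial.aeval g t, ?_, rfl⟩
          rw [mem_A0Mv_iff', MvPolynomial.comp_aeval_apply]
          have : (fun i => MvPolynomial.aeval (fun _ : X => (0 : k)) (g i))
              = fun _ : X => (0 : k) := funext fun i => mem_A0Mv_iff'.mp (hg i)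
          rw [this]
          exact mem_A0Mv_iff'.mp ht
        | zero => simpa using Submodule.zero_mem _
        | add a b _ _ ha hb => rw [map_add]; exact Submodule.add_mem _ ha hb
        | smul c a _ ha => rw [map_smul]; exact Submodule.smul_mem _ _ ha
    · rintro p ⟨u, hu, rfl⟩
      apply Submodule.subset_span
      refine ⟨u, hu, MvPolynomial.X x, ?_, rfl⟩
      rw [mem_A0Mv_iff']; simp
  · rw [Submodule.span_le]
    rintro p ⟨u, hu, t, ht, rfl⟩
    rw [SetLike.mem_coe, TSpMv]
    refine Submodule.mem_sInf.mpr ?_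
    rintro V ⟨⟨_, hsub⟩, hUV⟩
    have h1 : Polynomial.aeval (MvPolynomial.X x : MvPolynomial X k) u ∈ V :=
      hUV ⟨u, hu, rfl⟩
    have h2 := hsub (fun _ => t) (fun _ => ht) _ h1
    rwa [← Polynomial.aeval_algHom_apply (MvPolynomial.aeval fun _ : X => t)
      (MvPolynomial.X x) u, MvPolynomial.aeval_X] at h2

end Aux

/-- Let `X` have size at least two and `x ∈ X`; regard `k[x]₀ ⊆ k[X]₀` via the
natural inclusion. For any `U ⊆ k[x]₀` and `f ∈ k[x]₀`, `f` belongs to the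
`T`-space of `k[x]₀` generated by `U` iff `f` belongs to the `T`-space of
`k[X]₀` generated by `U`. -/
theorem mem_TSp_iff_mem_TSpMv [Nontrivial X] (x : X)
    (U : Set (Polynomial k)) (hU : U ⊆ (A0 k : Set (Polynomial k)))
    (f : Polynomial k) (hf : f ∈ A0 k) :
    f ∈ TSp k U ↔
      Polynomial.aeval (MvPolynomial.X x : MvPolynomial X k) f ∈
        TSpMv k X
          (⇑(Polynomial.aeval (MvPolynomial.X x : MvPolynomial X k) :
              Polynomial k →ₐ[k] MvPolynomial X k) '' U) := by
  let ι : Polynomial k →ₐ[k] MvPolynomial X k :=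
    Polynomial.aeval (MvPolynomial.X x : MvPolynomial X k)
  rw [TSp_eq_span hU, TSpMv_eq_span x hU]
  constructor
  · intro h
    have := Submodule.mem_map_of_mem (f := ι.toLinearMap) h
    rw [Submodule.map_span] at this
    refine Submodule.span_le.mpr ?_ this
    rintro p ⟨q, ⟨u, hu, g, hg, rfl⟩, rfl⟩
    show Polynomial.aeval (MvPolynomial.X x : MvPolynomial X k) (u.comp g)
      ∈ Submodule.span k (SGenMv X U)
    rw [Polynomial.aeval_comp]
    refine Submodule.subset_span ⟨u, hu, _, ?_, rfl⟩
    rw [mem_A0Mv_iff',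
      ← Polynomial.aeval_algHom_apply (MvPolynomial.aeval (fun _ : X => (0 : k)))
        (MvPolynomial.X x) g]
    rw [MvPolynomial.aeval_X]
    exact mem_A0_iff'.mp hg
  · intro h
    set π : MvPolynomial X k →ₐ[k] Polynomial k :=
      MvPolynomial.aeval (fun _ : X => (Polynomial.X : Polynomial k)) with hπ
    have hπι : π (ι f) = f := by
      rw [← Polynomial.aeval_algHom_apply π (MvPolynomial.X x) f]
      simp [hπ]
    have := Submodule.mem_map_of_mem (f := π.toLinearMap) h
    rw [Submodule.map_span] at this
    have hle : Submodule.span k (⇑π.toLinearMap '' SGenMv X U)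
        ≤ Submodule.span k (SGen U) := by
      rw [Submodule.span_le]
      rintro p ⟨q, ⟨u, hu, t, ht, rfl⟩, rfl⟩
      show π (Polynomial.aeval t u) ∈ Submodule.span k (SGen U)
      rw [← Polynomial.aeval_algHom_apply π t u]
      refine Submodule.subset_span ⟨u, hu, π t, ?_, rfl⟩
      rw [mem_A0_iff', hπ, MvPolynomial.comp_aeval_apply]
      have : (fun i : X => Polynomial.aeval (0 : k) (Polynomial.X : Polynomial k))
          = fun _ : X => (0 : k) := by funext i; simp
      rw [this]
      exact mem_A0Mv_iff'.mp ht
    have h2 : π (ι f) ∈ Submodule.span k (SGen U) := hle this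
    rwa [hπι] at h2
end
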